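/- Fix α1, α2, α3 > 0 and, for 0 < x1 < x2, set R(x1, x2) = 1 - G(x1)^(α1+α3) - G(x2)^(α2+α3) + G(x1)^(α1+α3) * G(x2)^(α2). Then R(x1, x2) > 0 and the second component of the hazard gradient satisfies -∂/∂x2 [ln R(x1, x2)] = γ2 * ( (α2+α3) * G(x2)^(α3) - α2 * G(x1)^(α1+α3) ) * G(x2)^(α2-1) / R(x1, x2), where γ2 = a*b*x2^(b-1)*exp(-a*x2^b*(exp(c*x2^d)-1)+c*x2^d)*(1+(c*d/b)*x2^d-exp(-c*x2^d)). -/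

import Mathlib

open Real

/-- Base CDF of the exponentiated generalized Weibull–Gompertz distribution. -/
noncomputable def G (a b c d x : ℝ) : ℝ :=
  1 - Real.exp (-(a * x ^ b * (Real.exp (c * x ^ d) - 1)))

/-!
Writing `p = G(x₁)^(α₁+α₃)` and `q = G(x₂)^α₂`, one has
`R = (1 - p)(1 - q) + q (1 - G(x₂)^α₃)`, which is positive since `0 < G < 1`.
The hazard formula is the chain rule for `log R`, once one observes that `γ₂` is exactly `G'(x₂)`.
-/

lemma G_lt_one (a b c d x : ℝ) : G a b c d x < 1 := by
  unfold G
  linarith [exp_pos (-(a * x ^ b * (exp (c * x ^ d) - 1)))]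

lemma G_pos {a b c d x : ℝ} (ha : 0 < a) (hc : 0 < c) (hx : 0 < x) : 0 < G a b c d x := by
  have hexp : 1 < exp (c * x ^ d) := one_lt_exp_iff.mpr (by positivity)
  have hH : 0 < a * x ^ b * (exp (c * x ^ d) - 1) :=
    mul_pos (mul_pos ha (rpow_pos_of_pos hx b)) (by linarith)
  unfold G
  linarith [exp_lt_one_iff.mpr (neg_lt_zero.mpr hH)]

lemma hasDerivAt_G {a b c d x : ℝ} (hb : b ≠ 0) (hx : 0 < x) :
    HasDerivAt (G a b c d)
      (a * b * x ^ (b - 1) * exp (-(a * x ^ b * (exp (c * x ^ d) - 1)) + c * x ^ d) *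
        (1 + (c * d / b) * x ^ d - exp (-(c * x ^ d)))) x := by
  have hpow : ∀ e : ℝ, HasDerivAt (fun y : ℝ => y ^ e) (e * x ^ (e - 1)) x := fun e =>
    hasDerivAt_rpow_const (Or.inl hx.ne')
  have hH := ((hpow b).const_mul a).mul ((((hpow d).const_mul c).exp).sub_const 1)
  refine ((hH.neg.exp).const_sub 1).congr_deriv ?_
  simp only [Pi.mul_apply, Pi.neg_apply]
  rw [rpow_sub_one hx.ne', rpow_sub_one hx.ne', exp_add, exp_neg, exp_neg]
  field_simp
  ring

lemma one_sub_rpow_sub_rpow_add_rpow_mul_pos {u v β α₂ α₃ : ℝ} (hu₀ : 0 ≤ u) (hu₁ : u ≤ 1)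
    (hv₀ : 0 < v) (hv₁ : v < 1) (hβ : 0 ≤ β) (hα₂ : 0 ≤ α₂) (hα₃ : 0 < α₃) :
    0 < 1 - u ^ β - v ^ (α₂ + α₃) + u ^ β * v ^ α₂ := by
  have hp : u ^ β ≤ 1 := rpow_le_one hu₀ hu₁ hβ
  have hq : v ^ α₂ ≤ 1 := rpow_le_one hv₀.le hv₁.le hα₂
  have hr : v ^ α₃ < 1 := rpow_lt_one hv₀.le hv₁ hα₃
  have hsplit : 1 - u ^ β - v ^ (α₂ + α₃) + u ^ β * v ^ α₂ =
      (1 - u ^ β) * (1 - v ^ α₂) + v ^ α₂ * (1 - v ^ α₃) := by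
    rw [rpow_add hv₀]
    ring
  rw [hsplit]
  exact add_pos_of_nonneg_of_pos (mul_nonneg (by linarith) (by linarith))
    (mul_pos (rpow_pos_of_pos hv₀ α₂) (by linarith))

lemma HasDerivAt.one_sub_sub_rpow_add_mul_rpow {f : ℝ → ℝ} {f' x p α₂ α₃ : ℝ}
    (hf : HasDerivAt f f' x) (hfx : 0 < f x) :
    HasDerivAt (fun y => 1 - p - f y ^ (α₂ + α₃) + p * f y ^ α₂)
      (-(f' * ((α₂ + α₃) * f x ^ α₃ - α₂ * p) * f x ^ (α₂ - 1))) x := by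
  refine (((hf.rpow_const (p := α₂ + α₃) (Or.inl hfx.ne')).const_sub (1 - p)).add
    ((hf.rpow_const (p := α₂) (Or.inl hfx.ne')).const_mul p)).congr_deriv ?_
  rw [show α₂ + α₃ - 1 = α₃ + (α₂ - 1) by ring, rpow_add hfx]
  ring

theorem stmt_13_general (a b c d : ℝ) (ha : 0 < a) (hb : 0 < b) (hc : 0 < c)
    (α₁ α₂ α₃ : ℝ) (hα₁ : 0 < α₁) (hα₂ : 0 < α₂) (hα₃ : 0 < α₃)
    (R : ℝ → ℝ → ℝ)
    (hR : ∀ y₁ y₂ : ℝ, R y₁ y₂ =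
      1 - (G a b c d y₁) ^ (α₁ + α₃) - (G a b c d y₂) ^ (α₂ + α₃) +
        (G a b c d y₁) ^ (α₁ + α₃) * (G a b c d y₂) ^ α₂)
    (x₁ x₂ : ℝ) (hx₁ : 0 < x₁) (hx₁₂ : x₁ < x₂) :
    0 < R x₁ x₂ ∧
      -(deriv (fun y₂ : ℝ => Real.log (R x₁ y₂)) x₂) =
        (a * b * x₂ ^ (b - 1) *
            Real.exp (-(a * x₂ ^ b * (Real.exp (c * x₂ ^ d) - 1)) + c * x₂ ^ d) *
            (1 + (c * d / b) * x₂ ^ d - Real.exp (-(c * x₂ ^ d)))) *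
          ((α₂ + α₃) * (G a b c d x₂) ^ α₃ - α₂ * (G a b c d x₁) ^ (α₁ + α₃)) *
          (G a b c d x₂) ^ (α₂ - 1) / R x₁ x₂ := by
  have hx₂ : 0 < x₂ := hx₁.trans hx₁₂
  have hG₂ : 0 < G a b c d x₂ := G_pos ha hc hx₂
  have hRpos : 0 < R x₁ x₂ := by
    rw [hR]
    exact one_sub_rpow_sub_rpow_add_rpow_mul_pos (G_pos ha hc hx₁).le (G_lt_one ..).le hG₂
      (G_lt_one ..) (by linarith) hα₂.le hα₃
  refine ⟨hRpos, ?_⟩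
  have hderiv := (((hasDerivAt_G (c := c) (d := d) hb.ne' hx₂).one_sub_sub_rpow_add_mul_rpow
    (p := G a b c d x₁ ^ (α₁ + α₃)) (α₂ := α₂) (α₃ := α₃) hG₂).log (by rw [← hR]; exact hRpos.ne'))
  simp only [← hR] at hderiv
  rw [hderiv.deriv, neg_div, neg_neg]

theorem stmt_13 (a b c d : ℝ) (ha : 0 < a) (hb : 0 < b) (hc : 0 < c) (hd : 0 < d)
    (α₁ α₂ α₃ : ℝ) (hα₁ : 0 < α₁) (hα₂ : 0 < α₂) (hα₃ : 0 < α₃)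
    (R : ℝ → ℝ → ℝ)
    (hR : ∀ y₁ y₂ : ℝ, R y₁ y₂ =
      1 - (G a b c d y₁) ^ (α₁ + α₃) - (G a b c d y₂) ^ (α₂ + α₃) +
        (G a b c d y₁) ^ (α₁ + α₃) * (G a b c d y₂) ^ α₂)
    (x₁ x₂ : ℝ) (hx₁ : 0 < x₁) (hx₁₂ : x₁ < x₂) :
    0 < R x₁ x₂ ∧
      -(deriv (fun y₂ : ℝ => Real.log (R x₁ y₂)) x₂) =
        (a * b * x₂ ^ (b - 1) *
            Real.exp (-(a * x₂ ^ b * (Real.exp (c * x₂ ^ d) - 1)) + c * x₂ ^ d) *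
            (1 + (c * d / b) * x₂ ^ d - Real.exp (-(c * x₂ ^ d)))) *
          ((α₂ + α₃) * (G a b c d x₂) ^ α₃ - α₂ * (G a b c d x₁) ^ (α₁ + α₃)) *
          (G a b c d x₂) ^ (α₂ - 1) / R x₁ x₂ :=
  stmt_13_general a b c d ha hb hc α₁ α₂ α₃ hα₁ hα₂ hα₃ R hR x₁ x₂ hx₁ hx₁₂
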